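/- arXiv:2511.20535 — 3 statements merged into one kernel-verified Lean document; each statement's English description precedes it below -/
import Mathlib

section
/- Assume |c| = p. Then J₀ = ∅ and K⁻ ⊆ C. -/
variable {p : ℕ}

/-- The unique `f`-preimage map `g(u,v) = (v, (u - c)/v)`. -/
noncomputable def g [Fact p.Prime] (c : ℚ_[p]) (z : ℚ_[p] × ℚ_[p]) : ℚ_[p] × ℚ_[p] :=
  (z.2, (z.1 - c) / z.2)

/-- The set `Q` of points whose backward iterates are all defined. -/
def QSet [Fact p.Prime] (c : ℚ_[p]) : Set (ℚ_[p] × ℚ_[p]) :=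
  {z | ∀ n : ℕ, ((g c)^[n] z).2 ≠ 0}

/-- `‖(x,y)‖ = max(|x|,|y|)`. -/
noncomputable def pnorm [Fact p.Prime] (z : ℚ_[p] × ℚ_[p]) : ℝ := max ‖z.1‖ ‖z.2‖

/-- The backward filled Julia set `K⁻`. -/
def KMinus [Fact p.Prime] (c : ℚ_[p]) : Set (ℚ_[p] × ℚ_[p]) :=
  {z | z ∈ QSet c ∧ ∃ M : ℝ, ∀ n : ℕ, pnorm ((g c)^[n] z) ≤ M}
/-- The Hénon-like map `f(x,y) = (xy + c, x)`. -/
noncomputable def fmap [Fact p.Prime] (c : ℚ_[p]) (z : ℚ_[p] × ℚ_[p]) : ℚ_[p] × ℚ_[p] :=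
  (z.1 * z.2 + c, z.1)

/-- The Fibonacci sequence with `F₀ = F₁ = 1`. -/
def Fb (n : ℕ) : ℕ := Nat.fib (n + 1)

/-- `J₀ = {(x,y) ∈ Q : |x| < |c|, 1 < |y| < |c|}`. -/
def J0 [Fact p.Prime] (c : ℚ_[p]) : Set (ℚ_[p] × ℚ_[p]) :=
  {z ∈ QSet c | ‖z.1‖ < ‖c‖ ∧ 1 < ‖z.2‖ ∧ ‖z.2‖ < ‖c‖}

def C0 [Fact p.Prime] (c : ℚ_[p]) : Set (ℚ_[p] × ℚ_[p]) :=
  {z ∈ QSet c | ‖z.1‖ < ‖c‖ ∧ (‖z.2‖ = 1 ∨ ‖z.2‖ = ‖c‖)} ∪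
    {z ∈ QSet c | ‖z.1‖ = ‖c‖ ∧ ‖z.2‖ ≤ ‖c‖}

/-- `C_{2n+1}`, for `n ≥ 0`. -/
def Codd [Fact p.Prime] (c : ℚ_[p]) (n : ℕ) : Set (ℚ_[p] × ℚ_[p]) :=
  {z ∈ QSet c | ‖c‖ ^ Fb (2*n) < ‖z.1‖ ∧ ‖z.1‖ ≤ ‖c‖ ^ Fb (2*n+2) ∧
    ‖z.2‖ ^ Fb (2*n+1) = ‖c‖⁻¹ * ‖z.1‖ ^ Fb (2*n)}

/-- `C_{2n+2}`, for `n ≥ 0`. -/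
def Ceven [Fact p.Prime] (c : ℚ_[p]) (n : ℕ) : Set (ℚ_[p] × ℚ_[p]) :=
  {z ∈ QSet c | ‖c‖ ^ Fb (2*n+1) < ‖z.1‖ ∧ ‖z.1‖ ≤ ‖c‖ ^ Fb (2*n+3) ∧
    ‖z.2‖ ^ Fb (2*n+2) = ‖c‖ * ‖z.1‖ ^ Fb (2*n+1)}

def D2 [Fact p.Prime] (c : ℚ_[p]) : Set (ℚ_[p] × ℚ_[p]) :=
  {z ∈ QSet c | ‖c‖ < ‖z.1‖ ∧ ‖z.1‖ < ‖c‖ ^ 2 ∧ ‖z.2‖ = ‖c‖}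

/-- `D_{2n+1}`, for `n ≥ 1`. -/
def Dodd [Fact p.Prime] (c : ℚ_[p]) (n : ℕ) : Set (ℚ_[p] × ℚ_[p]) :=
  {z ∈ QSet c | ‖c‖ ^ Fb (2*n) < ‖z.1‖ ∧ ‖z.1‖ < ‖c‖ ^ Fb (2*n+1) ∧
    ‖z.2‖ ^ Fb (2*n-1) = ‖c‖⁻¹ * ‖z.1‖ ^ Fb (2*n-2)}

/-- `D_{2n+2}`, for `n ≥ 1`. -/
def Deven [Fact p.Prime] (c : ℚ_[p]) (n : ℕ) : Set (ℚ_[p] × ℚ_[p]) :=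
  {z ∈ QSet c | ‖c‖ ^ Fb (2*n+1) < ‖z.1‖ ∧ ‖z.1‖ < ‖c‖ ^ Fb (2*n+2) ∧
    ‖z.2‖ ^ Fb (2*n) = ‖c‖ * ‖z.1‖ ^ Fb (2*n-1)}

/-- `C = ⋃_{i ≥ 0} (C_i ∪ D_{i+2})`. -/
def CSet [Fact p.Prime] (c : ℚ_[p]) : Set (ℚ_[p] × ℚ_[p]) :=
  C0 c ∪ (⋃ n : ℕ, Codd c n) ∪ (⋃ n : ℕ, Ceven c n) ∪
    D2 c ∪ (⋃ n : ℕ, Dodd c (n+1)) ∪ (⋃ n : ℕ, Deven c (n+1))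

/-!
Write `xₙ` for the first coordinate of the `n`-th backward iterate, so `x_{n+1} = yₙ` and
`|x_{n+2}| |x_{n+1}| = |xₙ - c|`. For `|c| = p` the exponents `sₙ = log_p |xₙ|` therefore satisfy
`s_{n+2} + s_{n+1} = max sₙ 1` (only `≤ 1` when `sₙ = 1`). A term `sₙ ≥ 2` followed by
`s_{n+1} ≤ 0` makes the exponents grow without bound, which cannot happen on `K⁻`. Hence on `K⁻`
every `sₙ ≥ 2` is followed by `1 ≤ s_{n+1} < sₙ`, and descending along the orbit shows that
`(s₀, s₁)` arises from `(2, 1)` by `(a, b) ↦ (a + b, a)`. By Cassini's identity such pairs satisfy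
the Fibonacci relations defining the sets `C_i` and `D_i`. `J₀ = ∅` because `|y|` is an integral
power of `p`.
-/

theorem intCast_Fb_add_two (n : ℕ) : (Fb (n + 2) : ℤ) = Fb n + Fb (n + 1) := by
  exact_mod_cast Nat.fib_add_two

theorem Fb_pos (n : ℕ) : 0 < Fb n := Nat.fib_pos.2 n.succ_pos

theorem Fb_mul_Fb_add_two_sub_sq (n : ℕ) :
    (Fb n * Fb (n + 2) : ℤ) - Fb (n + 1) ^ 2 = (-1) ^ n := by
  induction n with
  | zero => rfl
  | succ n ih =>
    rw [pow_succ]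
    linear_combination -ih + (Fb (n + 1) : ℤ) * intCast_Fb_add_two (n + 1)
      - (Fb (n + 2) : ℤ) * intCast_Fb_add_two n

theorem Fb_mul_Fb_add_three_sub (n : ℕ) :
    (Fb n * Fb (n + 3) : ℤ) - Fb (n + 1) * Fb (n + 2) = (-1) ^ n := by
  linear_combination Fb_mul_Fb_add_two_sub_sq n + (Fb n : ℤ) * intCast_Fb_add_two (n + 1)
    - (Fb (n + 1) : ℤ) * intCast_Fb_add_two n

-- The exponent pairs reached from `(2, 1)` by repeatedly applying `(a, b) ↦ (a + b, a)`.
def OnFibStaircase (a b : ℤ) : Prop :=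
  ∃ k : ℕ, (Fb k : ℤ) < a ∧ a < Fb (k + 3) ∧ b * Fb (k + 1) = a * Fb k - (-1) ^ k

theorem onFibStaircase_two_one : OnFibStaircase 2 1 := ⟨0, by decide⟩

theorem OnFibStaircase.add_left {a b : ℤ} (h : OnFibStaircase a b) :
    OnFibStaircase (a + b) a := by
  obtain ⟨k, hlo, hhi, hab⟩ := h
  have hF₂ := intCast_Fb_add_two k
  have cassini := Fb_mul_Fb_add_two_sub_sq k
  have dOcagne := Fb_mul_Fb_add_three_sub (k + 1)
  have hpos₁ : (0 : ℤ) < Fb (k + 1) := by exact_mod_cast Fb_pos _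
  have hpos₂ : (0 : ℤ) < Fb (k + 2) := by exact_mod_cast Fb_pos _
  rw [pow_succ] at dOcagne
  have key : (a + b) * Fb (k + 1) = a * Fb (k + 2) - (-1) ^ k := by
    linear_combination hab - a * hF₂
  refine ⟨k + 1, ?_, ?_, ?_⟩
  · nlinarith [mul_le_mul_of_nonneg_right (show (Fb k : ℤ) + 1 ≤ a by omega) hpos₂.le]
  · nlinarith [mul_le_mul_of_nonneg_right (show a ≤ Fb (k + 3) - 1 by omega) hpos₂.le]
  · rw [pow_succ, show k + 1 + 1 = k + 2 from rfl]
    linear_combination -key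

def ExpRecurrence (s : ℕ → ℤ) : Prop :=
  ∀ n, (s n ≠ 1 → s (n + 2) + s (n + 1) = max (s n) 1) ∧ (s n = 1 → s (n + 2) + s (n + 1) ≤ 1)

namespace ExpRecurrence

variable {s : ℕ → ℤ}

theorem eq_sub (H : ExpRecurrence s) {n : ℕ} (h : 1 < s n) : s (n + 2) = s n - s (n + 1) := by
  have := (H n).1 h.ne'
  rw [max_eq_left h.le] at this
  omega

theorem eq_one_sub (H : ExpRecurrence s) {n : ℕ} (h : s n < 1) :
    s (n + 2) = 1 - s (n + 1) := by
  have := (H n).1 h.ne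
  rw [max_eq_right h.le] at this
  omega

theorem add_le_of_neg (H : ExpRecurrence s) :
    ∀ k n, 2 ≤ s n → s (n + 1) < 0 → s n + k ≤ s (n + 2 * k) := by
  intro k
  induction k with
  | zero => simp
  | succ k ih =>
    intro n h₀ h₁
    have h₂ : s (n + 2) = s n - s (n + 1) := H.eq_sub (by omega)
    have h₃ : s (n + 3) = 1 - s (n + 2) := H.eq_one_sub (by omega)
    have h₄ : s (n + 2) + k ≤ s (n + 2 * (k + 1)) := by
      rw [show n + 2 * (k + 1) = n + 2 + 2 * k by ring]
      exact ih (n + 2) (by omega) (by show s (n + 3) < 0; omega)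
    push_cast
    omega

theorem one_le_of_two_le (H : ExpRecurrence s) (hs : BddAbove (Set.range s)) {n : ℕ}
    (h₀ : 2 ≤ s n) : 1 ≤ s (n + 1) := by
  by_contra! h₁
  obtain ⟨B, hB⟩ := hs
  have h₂ : s (n + 2) = s n - s (n + 1) := H.eq_sub (by omega)
  have h₃ : s (n + 3) = 1 - s (n + 2) := H.eq_one_sub (by omega)
  have := H.add_le_of_neg (B.toNat + 1) (n + 2) (by omega) (by show s (n + 3) < 0; omega)
  have := hB (Set.mem_range_self (n + 2 + 2 * (B.toNat + 1)))
  omega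

theorem eq_zero_or_eq_one_of_nonpos (H : ExpRecurrence s) (hs : BddAbove (Set.range s))
    {n : ℕ} (h₀ : s n ≤ 0) : s (n + 1) = 0 ∨ s (n + 1) = 1 := by
  have h₂ : s (n + 2) = 1 - s (n + 1) := H.eq_one_sub (by omega)
  by_contra! h₁
  rcases lt_or_gt_of_ne h₁.1 with h₁ | h₁
  · have h₃ : s (n + 3) = 1 - s (n + 2) := H.eq_one_sub (by omega)
    have : 1 ≤ s (n + 3) := H.one_le_of_two_le hs (by omega)
    omega
  · have : 1 ≤ s (n + 2) := H.one_le_of_two_le hs (by omega)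
    omega

theorem le_one_of_eq_one (H : ExpRecurrence s) (hs : BddAbove (Set.range s)) {n : ℕ}
    (h₀ : s n = 1) : s (n + 1) ≤ 1 := by
  have h₂ := (H n).2 h₀
  by_contra! h₁
  have : 1 ≤ s (n + 2) := H.one_le_of_two_le hs (by omega)
  omega

theorem onFibStaircase (H : ExpRecurrence s) (hs : BddAbove (Set.range s)) {n : ℕ}
    (h₀ : 2 ≤ s n) : OnFibStaircase (s n) (s (n + 1)) := by
  induction hm : (s n).toNat using Nat.strong_induction_on generalizing n with
  | _ m ih =>
    have h₁ := H.one_le_of_two_le hs h₀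
    have h₂ : s (n + 2) = s n - s (n + 1) := H.eq_sub (by omega)
    have h₁₂ : s (n + 1) < s n := by
      by_contra!
      have : 1 ≤ s (n + 2) := H.one_le_of_two_le hs (by omega)
      omega
    by_cases h₁' : s (n + 1) = 1
    · have h₃ : s (n + 3) + s (n + 2) ≤ 1 := (H (n + 1)).2 h₁'
      have h₀' : s n = 2 := by
        by_contra!
        have : 1 ≤ s (n + 3) := H.one_le_of_two_le hs (by show 2 ≤ s (n + 2); omega)
        omega
      rw [h₀', h₁']
      exact onFibStaircase_two_one
    · have : OnFibStaircase (s (n + 1)) (s (n + 2)) := ih _ (by omega) (by omega) rfl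
      simpa only [show s (n + 1) + s (n + 2) = s n by omega] using this.add_left

end ExpRecurrence

section Dynamics

variable [Fact p.Prime] {c : ℚ_[p]}

variable (p) in
theorem one_lt_prime_cast : (1 : ℝ) < p := Nat.one_lt_cast.2 (Fact.out : p.Prime).one_lt

variable (p) in
theorem prime_cast_pos : (0 : ℝ) < p := zero_lt_one.trans (one_lt_prime_cast p)

variable (p) in
theorem zpow_prime_strictMono : StrictMono fun k : ℤ => (p : ℝ) ^ k :=
  zpow_right_strictMono₀ (one_lt_prime_cast p)

theorem norm_sub_eq_zpow_max (hc : ‖c‖ = p) {u : ℚ_[p]} (hu : -u.valuation ≠ 1) :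
    ‖u - c‖ = (p : ℝ) ^ max (-u.valuation) 1 := by
  rw [sub_eq_add_neg]
  rcases lt_or_gt_of_ne hu with hu | hu
  · have hlt : ‖u‖ < ‖-c‖ := by
      rw [norm_neg, hc]
      exact ((Padic.norm_le_one_iff_val_nonneg u).2 (by omega)).trans_lt (one_lt_prime_cast p)
    rw [Padic.add_eq_max_of_ne hlt.ne, max_eq_right hlt.le, max_eq_right (by omega), norm_neg,
      hc, zpow_one]
  · have hu0 : u ≠ 0 := by rintro rfl; simp at hu
    have hgt : ‖-c‖ < ‖u‖ := by
      rw [norm_neg, hc, Padic.norm_eq_zpow_neg_valuation hu0]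
      exact (zpow_one (p : ℝ)).symm.trans_lt (zpow_prime_strictMono p hu)
    rw [Padic.add_eq_max_of_ne hgt.ne', max_eq_left hgt.le, max_eq_left (by omega),
      Padic.norm_eq_zpow_neg_valuation hu0]

theorem norm_sub_le_of_neg_valuation_eq_one (hc : ‖c‖ = p) {u : ℚ_[p]}
    (hu : -u.valuation = 1) : ‖u - c‖ ≤ p := by
  have hu0 : u ≠ 0 := by rintro rfl; simp at hu
  rw [sub_eq_add_neg]
  refine (Padic.nonarchimedean u (-c)).trans (max_le ?_ (by rw [norm_neg, hc]))
  rw [Padic.norm_eq_zpow_neg_valuation hu0, hu, zpow_one]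

theorem g_iterate_succ_fst (z : ℚ_[p] × ℚ_[p]) (n : ℕ) :
    ((g c)^[n + 1] z).1 = ((g c)^[n] z).2 := by
  rw [Function.iterate_succ_apply']
  rfl

theorem norm_g_iterate_succ_snd_mul {z : ℚ_[p] × ℚ_[p]} (hz : z ∈ QSet c) (n : ℕ) :
    ‖((g c)^[n + 1] z).2‖ * ‖((g c)^[n] z).2‖ = ‖((g c)^[n] z).1 - c‖ := by
  rw [Function.iterate_succ_apply', g, norm_div, div_mul_cancel₀ _ (norm_ne_zero_iff.2 (hz n))]

-- `x₀` may vanish; its exponent is then `0` (as `valuation 0 = 0`), which still fits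
-- `ExpRecurrence` because `|0 - c| = p`.
noncomputable def orbitExp (c : ℚ_[p]) (z : ℚ_[p] × ℚ_[p]) (n : ℕ) : ℤ :=
  -((g c)^[n] z).1.valuation

theorem norm_g_iterate_succ_fst {z : ℚ_[p] × ℚ_[p]} (hz : z ∈ QSet c) (n : ℕ) :
    ‖((g c)^[n + 1] z).1‖ = (p : ℝ) ^ orbitExp c z (n + 1) :=
  Padic.norm_eq_zpow_neg_valuation (by rw [g_iterate_succ_fst]; exact hz n)

theorem expRecurrence_orbitExp (hc : ‖c‖ = p) {z : ℚ_[p] × ℚ_[p]} (hz : z ∈ QSet c) :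
    ExpRecurrence (orbitExp c z) := by
  intro n
  have key : (p : ℝ) ^ (orbitExp c z (n + 2) + orbitExp c z (n + 1)) =
      ‖((g c)^[n] z).1 - c‖ := by
    rw [zpow_add₀ (prime_cast_pos p).ne',
      ← norm_g_iterate_succ_fst hz, ← norm_g_iterate_succ_fst hz, g_iterate_succ_fst,
      g_iterate_succ_fst, norm_g_iterate_succ_snd_mul hz]
  refine ⟨fun h => (zpow_prime_strictMono p).injective ?_, fun h => ?_⟩
  · exact key.trans (norm_sub_eq_zpow_max hc h)
  · refine (zpow_prime_strictMono p).le_iff_le.1 ?_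
    simpa only [key, zpow_one] using norm_sub_le_of_neg_valuation_eq_one hc h

theorem bddAbove_orbitExp {z : ℚ_[p] × ℚ_[p]} (hz : z ∈ KMinus c) :
    BddAbove (Set.range (orbitExp c z)) := by
  obtain ⟨-, M, hM⟩ := hz
  obtain ⟨N, hN⟩ := pow_unbounded_of_one_lt M (one_lt_prime_cast p)
  refine ⟨N, ?_⟩
  rintro _ ⟨n, rfl⟩
  by_cases hx : ((g c)^[n] z).1 = 0
  · simp [orbitExp, hx]
  · have : (p : ℝ) ^ orbitExp c z n < (p : ℝ) ^ (N : ℤ) := by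
      rw [zpow_natCast, orbitExp, ← Padic.norm_eq_zpow_neg_valuation hx]
      exact ((le_max_left _ _).trans (hM n)).trans_lt hN
    exact ((zpow_prime_strictMono p).lt_iff_lt.1 this).le

end Dynamics

section Classification

variable [Fact p.Prime] {c : ℚ_[p]}

theorem mem_CSet_iff {z : ℚ_[p] × ℚ_[p]} :
    z ∈ CSet c ↔ z ∈ C0 c ∨ z ∈ D2 c ∨ (∃ n, z ∈ Codd c n ∨ z ∈ Dodd c (n + 1)) ∨
      (∃ n, z ∈ Ceven c n ∨ z ∈ Deven c (n + 1)) := by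
  simp only [CSet, Set.mem_union, Set.mem_iUnion, exists_or]
  tauto

theorem mem_CSet_of_onFibStaircase (hc : ‖c‖ = p) {z : ℚ_[p] × ℚ_[p]} (hz : z ∈ QSet c)
    {a b : ℤ} (hx : ‖z.1‖ = (p : ℝ) ^ a) (hy : ‖z.2‖ = (p : ℝ) ^ b) (h : OnFibStaircase a b) :
    z ∈ CSet c := by
  obtain ⟨k, hlo, hhi, hab⟩ := h
  simp only [mem_CSet_iff, Codd, Ceven, Dodd, Deven, Set.mem_ofPred_eq, hc, hx, hy,
    ← zpow_natCast, ← zpow_mul, ← zpow_neg_one, ← zpow_add₀ (prime_cast_pos p).ne',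
    ← zpow_one_add₀ (prime_cast_pos p).ne',
    zpow_right_inj₀ (prime_cast_pos p) (one_lt_prime_cast p).ne',
    (zpow_prime_strictMono p).lt_iff_lt, (zpow_prime_strictMono p).le_iff_le]
  obtain ⟨m, rfl | rfl⟩ := Nat.even_or_odd' k
  · rw [pow_mul, neg_one_sq, one_pow] at hab
    refine Or.inr (Or.inr (Or.inl ⟨m, ?_⟩))
    rw [show 2 * (m + 1) = 2 * m + 2 by ring, show 2 * m + 2 - 1 = 2 * m + 1 by omega,
      show 2 * m + 2 - 2 = 2 * m by omega]
    by_cases hsplit : a ≤ Fb (2 * m + 2)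
    · exact Or.inl ⟨hz, hlo, hsplit, by linarith⟩
    · exact Or.inr ⟨hz, by omega, hhi, by linarith⟩
  · rw [pow_succ, pow_mul, neg_one_sq, one_pow] at hab
    simp only [add_assoc, Nat.reduceAdd] at hhi hab
    refine Or.inr (Or.inr (Or.inr ⟨m, ?_⟩))
    rw [show 2 * (m + 1) = 2 * m + 2 by ring, show 2 * m + 2 - 1 = 2 * m + 1 by omega]
    simp only [add_assoc, Nat.reduceAdd]
    by_cases hsplit : a ≤ Fb (2 * m + 3)
    · exact Or.inl ⟨hz, hlo, hsplit, by linarith⟩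
    · exact Or.inr ⟨hz, by omega, hhi, by linarith⟩

end Classification

theorem J0_eq_empty [Fact p.Prime] {c : ℚ_[p]} (hc : ‖c‖ = p) : J0 c = ∅ := by
  refine Set.eq_empty_iff_forall_notMem.2 ?_
  rintro z ⟨hz, -, hy₁, hyc⟩
  have hy : ‖z.2‖ = (p : ℝ) ^ (-z.2.valuation) := Padic.norm_eq_zpow_neg_valuation (hz 0)
  have h₀ : (0 : ℤ) < -z.2.valuation :=
    (zpow_lt_zpow_iff_right₀ (one_lt_prime_cast p)).1 (by rwa [zpow_zero, ← hy])
  have h₁ : -z.2.valuation < 1 :=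
    (zpow_lt_zpow_iff_right₀ (one_lt_prime_cast p)).1 (by rwa [zpow_one, ← hy, ← hc])
  omega

theorem stmt2_general [Fact p.Prime] (c : ℚ_[p]) (hc : ‖c‖ = p) :
    J0 c = ∅ ∧ KMinus c ⊆ CSet c := by
  refine ⟨J0_eq_empty hc, fun z hz => ?_⟩
  set s := orbitExp c z
  have H : ExpRecurrence s := expRecurrence_orbitExp hc hz.1
  have hs : BddAbove (Set.range s) := bddAbove_orbitExp hz
  have hs₀ : s 0 = -z.1.valuation := rfl
  have hy : ‖z.2‖ = (p : ℝ) ^ s 1 := norm_g_iterate_succ_fst hz.1 0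
  rcases le_or_gt (s 0) 0 with h₀ | h₀
  · have hx : ‖z.1‖ < ‖c‖ :=
      hc ▸ ((Padic.norm_le_one_iff_val_nonneg _).2 (by omega)).trans_lt (one_lt_prime_cast p)
    refine mem_CSet_iff.2 (Or.inl (Or.inl ⟨hz.1, hx, ?_⟩))
    rcases H.eq_zero_or_eq_one_of_nonpos hs (n := 0) h₀ with h₁ | h₁
    · exact Or.inl (by rw [hy, h₁, zpow_zero])
    · exact Or.inr (by rw [hy, h₁, zpow_one, hc])
  have hx : ‖z.1‖ = (p : ℝ) ^ s 0 :=
    Padic.norm_eq_zpow_neg_valuation fun h => by simp [hs₀, h] at h₀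
  rcases (show 1 ≤ s 0 by omega).eq_or_lt with h₀ | h₀
  · refine mem_CSet_iff.2 (Or.inl (Or.inr ⟨hz.1, by rw [hx, ← h₀, zpow_one, hc], ?_⟩))
    rw [hy, hc]
    exact (zpow_le_zpow_right₀ (one_lt_prime_cast p).le (H.le_one_of_eq_one hs h₀.symm)).trans_eq
      (zpow_one _)
  · exact mem_CSet_of_onFibStaircase hc hz.1 hx hy (H.onFibStaircase hs (n := 0) h₀)

/-- If `|c| = p` then `J₀ = ∅` and `K⁻ ⊆ C`. -/
theorem stmt2 [Fact p.Prime] (hodd : Odd p) (c : ℚ_[p]) (hc : ‖c‖ = p) :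
    J0 c = ∅ ∧ KMinus c ⊆ CSet c :=
  stmt2_general c hc
end

section
/- Assume |c| = 1. Then F ∪ G ∪ H ⊆ Q \ K⁻; that is, every point of F ∪ G ∪ H has unbounded backward orbit. -/
variable {p : ℕ}

/-!
Call a point with `|x| ≤ 1 < |y|` escaping. For such a point `g² (x, y) = (x', y')` with
`x' = (x - c)/y` and `y' = y (y - c)/(x - c)`; as `|y - c| = |y|` and `|x - c| ≤ 1`, the point
`(x', y')` is again escaping with `|y'| ≥ |y|²`, so `|y|^(2^n)` bounds the `2n`-th iterate from
below. A point of `F` or `H` is mapped by `g` to an escaping point, because `|x - c| > |y|` there.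
-/

open IsUltrametricDist Function

theorem IsUltrametricDist.norm_sub_eq_max_of_norm_ne_norm {S : Type*} [SeminormedAddCommGroup S]
    [IsUltrametricDist S] {x y : S} (h : ‖x‖ ≠ ‖y‖) : ‖x - y‖ = max ‖x‖ ‖y‖ := by
  rw [sub_eq_add_neg, norm_add_eq_max_of_norm_ne_norm (by rwa [norm_neg]), norm_neg]

section

variable [Fact p.Prime] {c : ℚ_[p]} {z : ℚ_[p] × ℚ_[p]}

lemma g_mem_QSet (hz : z ∈ QSet c) : g c z ∈ QSet c := fun n => by
  simpa only [iterate_succ_apply] using hz (n + 1)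

lemma g_mem_KMinus (hz : z ∈ KMinus c) : g c z ∈ KMinus c := by
  obtain ⟨hQ, M, hM⟩ := hz
  exact ⟨g_mem_QSet hQ, M, fun n => by simpa only [iterate_succ_apply] using hM (n + 1)⟩

lemma g_escaping (hy : ‖z.2‖ ≤ 1) (hlt : ‖z.2‖ < ‖z.1 - c‖) (hy0 : z.2 ≠ 0) :
    ‖(g c z).1‖ ≤ 1 ∧ 1 < ‖(g c z).2‖ := by
  refine ⟨hy, ?_⟩
  rw [g, norm_div, one_lt_div (norm_pos_iff.mpr hy0)]
  exact hlt

lemma escaping_g_g (hc : ‖c‖ = 1) (hx : ‖z.1‖ ≤ 1) (hy : 1 < ‖z.2‖) (h : (g c z).2 ≠ 0) :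
    ‖(g c (g c z)).1‖ ≤ 1 ∧ ‖z.2‖ ^ 2 ≤ ‖(g c (g c z)).2‖ := by
  have hxc : ‖z.1 - c‖ ≤ 1 := by
    rw [sub_eq_add_neg]
    exact (norm_add_le_max _ _).trans (by rw [norm_neg, hc]; exact max_le hx le_rfl)
  have hxc0 : 0 < ‖z.1 - c‖ := norm_pos_iff.mpr fun h0 => h (by simp [g, h0])
  have hyc : ‖z.2 - c‖ = ‖z.2‖ := by
    rw [norm_sub_eq_max_of_norm_ne_norm (by rw [hc]; exact hy.ne'), hc, max_eq_left hy.le]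
  have hy0 : 0 < ‖z.2‖ := one_pos.trans hy
  simp only [g, norm_div, hyc]
  constructor
  · rw [div_le_one hy0]
    exact hxc.trans hy.le
  · rw [div_div_eq_mul_div, le_div_iff₀ hxc0, sq]
    exact mul_le_of_le_one_right (by positivity) hxc

lemma escaping_iterate_two_mul (hc : ‖c‖ = 1) (hz : z ∈ QSet c) (hx : ‖z.1‖ ≤ 1)
    (hy : 1 < ‖z.2‖) (n : ℕ) :
    ‖((g c)^[2 * n] z).1‖ ≤ 1 ∧ ‖z.2‖ ^ 2 ^ n ≤ ‖((g c)^[2 * n] z).2‖ := by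
  induction n with
  | zero => simpa using hx
  | succ n ih =>
    have hw : 1 < ‖((g c)^[2 * n] z).2‖ :=
      (one_lt_pow₀ hy (pow_ne_zero _ two_ne_zero)).trans_le ih.2
    have hgw : (g c ((g c)^[2 * n] z)).2 ≠ 0 := by
      simpa only [iterate_succ_apply'] using hz (2 * n + 1)
    obtain ⟨hx', hy'⟩ := escaping_g_g hc ih.1 hw hgw
    rw [mul_add_one, iterate_succ_apply', iterate_succ_apply']
    refine ⟨hx', le_trans ?_ hy'⟩
    rw [pow_succ, pow_mul]
    exact pow_le_pow_left₀ (by positivity) ih.2 2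

lemma notMem_KMinus (hc : ‖c‖ = 1) (hx : ‖z.1‖ ≤ 1) (hy : 1 < ‖z.2‖) : z ∉ KMinus c := by
  rintro ⟨hQ, M, hM⟩
  obtain ⟨k, hk⟩ := pow_unbounded_of_one_lt M hy
  refine (hM (2 * k)).not_gt ?_
  calc M < ‖z.2‖ ^ k := hk
    _ ≤ ‖z.2‖ ^ 2 ^ k := pow_le_pow_right₀ hy.le Nat.lt_two_pow_self.le
    _ ≤ ‖((g c)^[2 * k] z).2‖ := (escaping_iterate_two_mul hc hQ hx hy k).2
    _ ≤ pnorm ((g c)^[2 * k] z) := le_max_right _ _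

end

theorem stmt14_general [Fact p.Prime] (c : ℚ_[p]) (hc : ‖c‖ = 1)
    (F G H : Set (ℚ_[p] × ℚ_[p]))
    (hF : F = {z ∈ QSet c | ‖z.1‖ < 1 ∧ ‖z.2‖ < 1})
    (hG : G = {z ∈ QSet c | ‖z.1‖ ≤ 1 ∧ 1 < ‖z.2‖})
    (hH : H = {z ∈ QSet c | 1 < ‖z.1‖ ∧ ‖z.2‖ ≤ 1}) :
    F ∪ G ∪ H ⊆ QSet c \ KMinus c := by
  subst hF hG hH
  rintro z ((⟨hQ, hx, hy⟩ | ⟨hQ, hx, hy⟩) | ⟨hQ, hx, hy⟩) <;> refine ⟨hQ, fun hK => ?_⟩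
  · have hxc : ‖z.1 - c‖ = 1 := by
      rw [norm_sub_eq_max_of_norm_ne_norm (by rw [hc]; exact hx.ne), hc, max_eq_right hx.le]
    obtain ⟨hx', hy'⟩ := g_escaping hy.le (hxc ▸ hy) (hQ 0)
    exact notMem_KMinus hc hx' hy' (g_mem_KMinus hK)
  · exact notMem_KMinus hc hx hy hK
  · have hxc : ‖z.1 - c‖ = ‖z.1‖ := by
      rw [norm_sub_eq_max_of_norm_ne_norm (by rw [hc]; exact hx.ne'), hc, max_eq_left hx.le]
    obtain ⟨hx', hy'⟩ := g_escaping hy (hxc ▸ hy.trans_lt hx) (hQ 0)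
    exact notMem_KMinus hc hx' hy' (g_mem_KMinus hK)

/-- If `|c| = 1` then `F ∪ G ∪ H ⊆ Q \ K⁻`. -/
theorem stmt14 [Fact p.Prime] (hodd : Odd p) (c : ℚ_[p]) (hc : ‖c‖ = 1)
    (F G H : Set (ℚ_[p] × ℚ_[p]))
    (hF : F = {z ∈ QSet c | ‖z.1‖ < 1 ∧ ‖z.2‖ < 1})
    (hG : G = {z ∈ QSet c | ‖z.1‖ ≤ 1 ∧ 1 < ‖z.2‖})
    (hH : H = {z ∈ QSet c | 1 < ‖z.1‖ ∧ ‖z.2‖ ≤ 1}) :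
    F ∪ G ∪ H ⊆ QSet c \ KMinus c :=
  stmt14_general c hc F G H hF hG hH
end

section
/- Let c = p and (x,y) = (p + 2p³, 2p). Then (x,y) ∈ Q (i.e., all backward iterates gⁿ(x,y) are defined), |x| = |y| = |c| = p^{-1}, and writing (x_{-n}, y_{-n}) = gⁿ(x,y), for every n ≥ 1 one has (|x_{-2n-1}|, |y_{-2n-1}|) = (p^{2ⁿ - 1}, p^{-2ⁿ}) and (|x_{-2n-2}|, |y_{-2n-2}|) = (p^{-2ⁿ}, p^{2^{n+1} - 1}). In particular ‖gⁿ(x,y)‖ → +∞ as n → +∞, so (x,y) ∈ R \ K⁻. -/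
variable {p : ℕ}

/-!
The backward map acts on norms by `(a, b) ↦ (b, max(a, |c|) / b)` as long as `a ≠ |c|`
(ultrametric inequality). For `c = p` the first two backward steps cancel the leading terms
and are computed exactly, reaching `(p², p⁻¹)`; from the third step on the exponents of `p` in
the norms alternate between `(2ⁿ - 1, -2ⁿ)` and `(-2ⁿ, 2ⁿ⁺¹ - 1)`, so the orbit escapes to
infinity at a doubly exponential rate.
-/

open Filter

lemma Padic.norm_sub_eq_max_of_ne [Fact p.Prime] {a b : ℚ_[p]} (h : ‖a‖ ≠ ‖b‖) :
    ‖a - b‖ = max ‖a‖ ‖b‖ := by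
  rw [sub_eq_add_neg, Padic.add_eq_max_of_ne (by rwa [norm_neg]), norm_neg]

lemma Padic.norm_two_of_odd [Fact p.Prime] (hodd : Odd p) : ‖(2 : ℚ_[p])‖ = 1 := by
  simpa using Padic.norm_natCast_eq_one_iff.2 (Nat.coprime_two_right.2 hodd)

lemma pow_le_zpow_two_pow_sub_one {q : ℝ} (hq : 1 ≤ q) (n : ℕ) :
    q ^ n ≤ q ^ ((2 : ℤ) ^ n - 1) := by
  rw [← zpow_natCast]
  refine zpow_le_zpow_right₀ hq ?_
  have : (n : ℤ) < 2 ^ n := by exact_mod_cast Nat.lt_two_pow_self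
  omega

lemma Nat.forall_ge_three_of_odd_of_even {P : ℕ → Prop} (hodd : ∀ n, 1 ≤ n → P (2 * n + 1))
    (heven : ∀ n, 1 ≤ n → P (2 * n + 2)) (k : ℕ) (hk : 3 ≤ k) : P k := by
  obtain ⟨m, rfl | rfl⟩ := Nat.even_or_odd' k
  · obtain ⟨n, rfl⟩ : ∃ n, m = n + 1 := ⟨m - 1, by omega⟩
    exact heven n (by omega)
  · exact hodd m (by omega)

section BackwardMap

variable [Fact p.Prime] {c : ℚ_[p]}

lemma norm_g_snd_of_norm_ne {w : ℚ_[p] × ℚ_[p]} (h : ‖w.1‖ ≠ ‖c‖) :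
    ‖(g c w).2‖ = max ‖w.1‖ ‖c‖ / ‖w.2‖ := by
  rw [g, norm_div, Padic.norm_sub_eq_max_of_ne h]

lemma norm_g_of_norm_eq_zpow (hc : ‖c‖ = (p : ℝ)⁻¹) {w : ℚ_[p] × ℚ_[p]} {s t : ℤ}
    (hs : ‖w.1‖ = (p : ℝ) ^ s) (ht : ‖w.2‖ = (p : ℝ) ^ t) (hs1 : s ≠ -1) :
    ‖(g c w).1‖ = (p : ℝ) ^ t ∧ ‖(g c w).2‖ = (p : ℝ) ^ (max s (-1) - t) := by
  have hp : (1 : ℝ) < p := by exact_mod_cast (Fact.out : p.Prime).one_lt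
  rw [← zpow_neg_one] at hc
  refine ⟨ht, ?_⟩
  have hne : ‖w.1‖ ≠ ‖c‖ := by
    rw [hs, hc]
    exact (zpow_right_injective₀ (by positivity) hp.ne').ne hs1
  rw [norm_g_snd_of_norm_ne hne, hs, hc, ht, ← (zpow_right_mono₀ hp.le).map_max,
    ← zpow_sub₀ (by positivity)]

lemma norm_g_g_of_norm_eq (hc : ‖c‖ = (p : ℝ)⁻¹) {w : ℚ_[p] × ℚ_[p]} {n : ℕ} (hn : 1 ≤ n)
    (h1 : ‖w.1‖ = (p : ℝ) ^ ((2 : ℤ) ^ n - 1)) (h2 : ‖w.2‖ = (p : ℝ) ^ (-(2 : ℤ) ^ n)) :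
    (‖(g c w).1‖ = (p : ℝ) ^ (-(2 : ℤ) ^ n) ∧
      ‖(g c w).2‖ = (p : ℝ) ^ ((2 : ℤ) ^ (n + 1) - 1)) ∧
    (‖(g c (g c w)).1‖ = (p : ℝ) ^ ((2 : ℤ) ^ (n + 1) - 1) ∧
      ‖(g c (g c w)).2‖ = (p : ℝ) ^ (-(2 : ℤ) ^ (n + 1))) := by
  have h2n : (2 : ℤ) ≤ 2 ^ n := le_self_pow₀ (by norm_num) (by omega)
  obtain ⟨h1', h2'⟩ := norm_g_of_norm_eq_zpow hc h1 h2 (by omega)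
  rw [max_eq_left (by omega), show (2 : ℤ) ^ n - 1 - -2 ^ n = 2 ^ (n + 1) - 1 by ring] at h2'
  obtain ⟨h1'', h2''⟩ := norm_g_of_norm_eq_zpow hc h1' h2' (by omega)
  rw [max_eq_right (by omega), show (-1 : ℤ) - (2 ^ (n + 1) - 1) = -2 ^ (n + 1) by ring] at h2''
  exact ⟨⟨h1', h2'⟩, h1'', h2''⟩

lemma norm_iterate_g (hc : ‖c‖ = (p : ℝ)⁻¹) {z : ℚ_[p] × ℚ_[p]}
    (h1 : ‖((g c)^[3] z).1‖ = (p : ℝ) ^ ((2 : ℤ) ^ 1 - 1))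
    (h2 : ‖((g c)^[3] z).2‖ = (p : ℝ) ^ (-(2 : ℤ) ^ 1)) (n : ℕ) (hn : 1 ≤ n) :
    ‖((g c)^[2 * n + 1] z).1‖ = (p : ℝ) ^ ((2 : ℤ) ^ n - 1) ∧
    ‖((g c)^[2 * n + 1] z).2‖ = (p : ℝ) ^ (-(2 : ℤ) ^ n) ∧
    ‖((g c)^[2 * n + 2] z).1‖ = (p : ℝ) ^ (-(2 : ℤ) ^ n) ∧
    ‖((g c)^[2 * n + 2] z).2‖ = (p : ℝ) ^ ((2 : ℤ) ^ (n + 1) - 1) := by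
  have hodd : ∀ n, 1 ≤ n → ‖((g c)^[2 * n + 1] z).1‖ = (p : ℝ) ^ ((2 : ℤ) ^ n - 1) ∧
      ‖((g c)^[2 * n + 1] z).2‖ = (p : ℝ) ^ (-(2 : ℤ) ^ n) := by
    refine Nat.le_induction ⟨h1, h2⟩ fun n hn ih => ?_
    rw [show 2 * (n + 1) + 1 = 2 * n + 1 + 1 + 1 by ring, Function.iterate_succ_apply',
      Function.iterate_succ_apply']
    exact (norm_g_g_of_norm_eq hc hn ih.1 ih.2).2
  obtain ⟨h1, h2⟩ := hodd n hn
  rw [Function.iterate_succ_apply' _ (2 * n + 1)]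
  exact ⟨h1, h2, (norm_g_g_of_norm_eq hc hn h1 h2).1⟩

lemma iterate_g_snd_ne_zero (hc : ‖c‖ = (p : ℝ)⁻¹) {z : ℚ_[p] × ℚ_[p]}
    (h1 : ‖((g c)^[3] z).1‖ = (p : ℝ) ^ ((2 : ℤ) ^ 1 - 1))
    (h2 : ‖((g c)^[3] z).2‖ = (p : ℝ) ^ (-(2 : ℤ) ^ 1)) (k : ℕ) (hk : 3 ≤ k) :
    ((g c)^[k] z).2 ≠ 0 := by
  have hp : (0 : ℝ) < p := by exact_mod_cast (Fact.out : p.Prime).pos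
  refine Nat.forall_ge_three_of_odd_of_even (P := fun k => ((g c)^[k] z).2 ≠ 0)
    (fun n hn => ?_) (fun n hn => ?_) k hk
  · rw [← norm_ne_zero_iff, (norm_iterate_g hc h1 h2 n hn).2.1]; positivity
  · rw [← norm_ne_zero_iff, (norm_iterate_g hc h1 h2 n hn).2.2.2]; positivity

lemma tendsto_pnorm_iterate_g (hc : ‖c‖ = (p : ℝ)⁻¹) {z : ℚ_[p] × ℚ_[p]}
    (h1 : ‖((g c)^[3] z).1‖ = (p : ℝ) ^ ((2 : ℤ) ^ 1 - 1))
    (h2 : ‖((g c)^[3] z).2‖ = (p : ℝ) ^ (-(2 : ℤ) ^ 1)) :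
    Tendsto (fun k : ℕ => pnorm ((g c)^[k] z)) atTop atTop := by
  have hp : (1 : ℝ) < p := by exact_mod_cast (Fact.out : p.Prime).one_lt
  have key := norm_iterate_g hc h1 h2
  have hgrowth : ∀ k, 3 ≤ k → (p : ℝ) ^ (k / 2) ≤ pnorm ((g c)^[k] z) := by
    refine Nat.forall_ge_three_of_odd_of_even (fun n hn => ?_) (fun n hn => ?_)
    · calc (p : ℝ) ^ ((2 * n + 1) / 2) = (p : ℝ) ^ n := by congr 1; omega
        _ ≤ (p : ℝ) ^ ((2 : ℤ) ^ n - 1) := pow_le_zpow_two_pow_sub_one hp.le n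
        _ ≤ _ := (key n hn).1 ▸ le_max_left _ _
    · calc (p : ℝ) ^ ((2 * n + 2) / 2) = (p : ℝ) ^ (n + 1) := by congr 1; omega
        _ ≤ (p : ℝ) ^ ((2 : ℤ) ^ (n + 1) - 1) := pow_le_zpow_two_pow_sub_one hp.le (n + 1)
        _ ≤ _ := (key n hn).2.2.2 ▸ le_max_right _ _
  exact tendsto_atTop_mono' _ ((eventually_ge_atTop 3).mono hgrowth)
    ((tendsto_pow_atTop_atTop_of_one_lt hp).comp (Nat.tendsto_div_const_atTop two_ne_zero))

lemma notMem_KMinus_of_tendsto (z : ℚ_[p] × ℚ_[p])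
    (h : Tendsto (fun n : ℕ => pnorm ((g c)^[n] z)) atTop atTop) : z ∉ KMinus c := by
  rintro ⟨-, M, hM⟩
  exact not_bddAbove_of_tendsto_atTop h ⟨M, by rintro _ ⟨n, rfl⟩; exact hM n⟩

end BackwardMap

section EscapingPoint

noncomputable def escapingPoint (p : ℕ) [Fact p.Prime] : ℚ_[p] × ℚ_[p] :=
  ((p : ℚ_[p]) + 2 * (p : ℚ_[p]) ^ 3, 2 * (p : ℚ_[p]))

variable [Fact p.Prime]

lemma norm_escapingPoint_fst (hodd : Odd p) : ‖(escapingPoint p).1‖ = (p : ℝ)⁻¹ := by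
  have hp : (1 : ℝ) < p := by exact_mod_cast (Fact.out : p.Prime).one_lt
  have hlt : ‖2 * (p : ℚ_[p]) ^ 3‖ < ‖(p : ℚ_[p])‖ := by
    rw [norm_mul, Padic.norm_two_of_odd hodd, one_mul, Padic.norm_p_pow, Padic.norm_p,
      ← zpow_neg_one]
    exact zpow_lt_zpow_right₀ hp (by norm_num)
  rw [escapingPoint, Padic.add_eq_max_of_ne hlt.ne', max_eq_left hlt.le, Padic.norm_p]

lemma norm_escapingPoint_snd (hodd : Odd p) : ‖(escapingPoint p).2‖ = (p : ℝ)⁻¹ := by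
  rw [escapingPoint, norm_mul, Padic.norm_two_of_odd hodd, one_mul, Padic.norm_p]

lemma g_iterate_two_escapingPoint :
    (g (p : ℚ_[p]))^[2] (escapingPoint p) = ((p : ℚ_[p]) ^ 2, (p : ℚ_[p])⁻¹) := by
  have hp : (p : ℚ_[p]) ≠ 0 := Nat.cast_ne_zero.2 (Fact.out : p.Prime).ne_zero
  simp only [escapingPoint, Function.iterate_succ, Function.iterate_zero, Function.comp_apply,
    id, g, Prod.mk.injEq]
  field_simp
  ring_nf
  simp

lemma norm_g_iterate_three_escapingPoint :
    ‖((g (p : ℚ_[p]))^[3] (escapingPoint p)).1‖ = (p : ℝ) ^ ((2 : ℤ) ^ 1 - 1) ∧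
      ‖((g (p : ℚ_[p]))^[3] (escapingPoint p)).2‖ = (p : ℝ) ^ (-(2 : ℤ) ^ 1) := by
  rw [Function.iterate_succ_apply', g_iterate_two_escapingPoint]
  have h := norm_g_of_norm_eq_zpow (p := p) Padic.norm_p (w := ((p : ℚ_[p]) ^ 2, (p : ℚ_[p])⁻¹))
    (s := -2) (t := 1) (Padic.norm_p_pow 2) (by simp) (by norm_num)
  norm_num at h ⊢
  exact h

lemma escapingPoint_mem_QSet : escapingPoint p ∈ QSet (p : ℚ_[p]) := by
  have hp : (p : ℚ_[p]) ≠ 0 := Nat.cast_ne_zero.2 (Fact.out : p.Prime).ne_zero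
  intro k
  rcases lt_or_ge k 3 with hk | hk
  · interval_cases k
    · exact mul_ne_zero two_ne_zero hp
    · change ((g (p : ℚ_[p]))^[2] (escapingPoint p)).1 ≠ 0
      rw [g_iterate_two_escapingPoint]
      exact pow_ne_zero 2 hp
    · rw [g_iterate_two_escapingPoint]
      exact inv_ne_zero hp
  · exact iterate_g_snd_ne_zero Padic.norm_p norm_g_iterate_three_escapingPoint.1
      norm_g_iterate_three_escapingPoint.2 k hk

end EscapingPoint

/-- For `c = p` and `(x,y) = (p + 2p³, 2p)`: `(x,y) ∈ Q`, `|x| = |y| = |c| = p⁻¹`,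
the norms of the backward iterates are as stated, and `(x,y) ∈ R \ K⁻`. -/
theorem stmt18 [Fact p.Prime] (hodd : Odd p)
    (c : ℚ_[p]) (hc : c = (p : ℚ_[p]))
    (z : ℚ_[p] × ℚ_[p])
    (hz : z = ((p : ℚ_[p]) + 2 * (p : ℚ_[p]) ^ 3, 2 * (p : ℚ_[p]))) :
    z ∈ QSet c ∧
      (‖z.1‖ = (p : ℝ)⁻¹ ∧ ‖z.2‖ = (p : ℝ)⁻¹ ∧ ‖c‖ = (p : ℝ)⁻¹) ∧
      (∀ n : ℕ, 1 ≤ n →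
        ‖((g c)^[2*n+1] z).1‖ = (p : ℝ) ^ ((2:ℤ) ^ n - 1) ∧
        ‖((g c)^[2*n+1] z).2‖ = (p : ℝ) ^ (-(2:ℤ) ^ n) ∧
        ‖((g c)^[2*n+2] z).1‖ = (p : ℝ) ^ (-(2:ℤ) ^ n) ∧
        ‖((g c)^[2*n+2] z).2‖ = (p : ℝ) ^ ((2:ℤ) ^ (n+1) - 1)) ∧
      Filter.Tendsto (fun n : ℕ => pnorm ((g c)^[n] z)) Filter.atTop Filter.atTop ∧
      z ∈ {w ∈ QSet c | ‖w.1‖ = ‖c‖ ∧ ‖w.2‖ = ‖c‖} \ KMinus c := by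
  obtain rfl : z = escapingPoint p := hz
  have hc' : ‖c‖ = (p : ℝ)⁻¹ := hc ▸ Padic.norm_p
  subst hc
  have hQ := escapingPoint_mem_QSet (p := p)
  have hx := norm_escapingPoint_fst hodd
  have hy := norm_escapingPoint_snd hodd
  obtain ⟨h1, h2⟩ := norm_g_iterate_three_escapingPoint (p := p)
  have htend := tendsto_pnorm_iterate_g hc' h1 h2
  exact ⟨hQ, ⟨hx, hy, hc'⟩, norm_iterate_g hc' h1 h2, htend,
    ⟨hQ, by rw [hx, hc'], by rw [hy, hc']⟩, notMem_KMinus_of_tendsto _ htend⟩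
end
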